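/- The Burau matrix of the positive lift of u = s1*s2*s1*s3 in B4: over Z[v,v^{-1}], the product B1*B2*B1*B3 equals the matrix [[0,0,-v^4],[v^3,v^2,v^3],[0,-v,-v^2]]. In particular its projlen equals 3, which is odd, showing that the identity projlen(pi_4(sigma)) = 2*(Garside length of sigma) valid for B3 fails for B4. -/

import Mathlib

open LaurentPolynomial

/-- The three reduced Burau matrices `B1, B2, B3` for the 4-strand braid group,
over the Laurent polynomial ring `ℤ[v,v⁻¹]` (here `v = T 1`). -/
noncomputable def BurauB : Fin 3 → Matrix (Fin 3) (Fin 3) (LaurentPolynomial ℤ)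
  | 0 => !![-(T 1)^2, -(T 1), 0; 0, 1, 0; 0, 0, 1]
  | 1 => !![1, 0, 0; -(T 1), -(T 1)^2, -(T 1); 0, 0, 1]
  | 2 => !![1, 0, 0; 0, 1, 0; 0, -(T 1), -(T 1)^2]

/-- The set of exponents of `v` occurring (with nonzero coefficient) in an entry
of a 3×3 matrix of Laurent polynomials. -/
def matExps (A : Matrix (Fin 3) (Fin 3) (LaurentPolynomial ℤ)) : Set ℤ :=
  {k | ∃ i j, (show ℤ →₀ ℤ from (A i j).coeff) k ≠ 0}

/-- `deg` of a matrix: the highest power of `v` occurring in an entry. -/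
noncomputable def matDeg (A : Matrix (Fin 3) (Fin 3) (LaurentPolynomial ℤ)) : ℤ := sSup (matExps A)

/-- `val` of a matrix: the lowest power of `v` occurring in an entry. -/
noncomputable def matVal (A : Matrix (Fin 3) (Fin 3) (LaurentPolynomial ℤ)) : ℤ := sInf (matExps A)

/-- `projlen` of a matrix: `deg` minus `val`. -/
noncomputable def projlen (A : Matrix (Fin 3) (Fin 3) (LaurentPolynomial ℤ)) : ℤ := matDeg A - matVal A

theorem burau_s1s2s1s3_generic {R : Type*} [CommRing R] (t : R) :
    !![-t ^ 2, -t, 0; 0, 1, 0; 0, 0, 1] * !![1, 0, 0; -t, -t ^ 2, -t; 0, 0, 1] *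
        !![-t ^ 2, -t, 0; 0, 1, 0; 0, 0, 1] * !![1, 0, 0; 0, 1, 0; 0, -t, -t ^ 2] =
      !![0, 0, -t ^ 4; t ^ 3, t ^ 2, t ^ 3; 0, -t, -t ^ 2] := by
  simp only [Matrix.mul_fin_three]
  ring_nf

theorem BurauB_s1s2s1s3 : BurauB 0 * BurauB 1 * BurauB 0 * BurauB 2 =
    !![0, 0, -(T 1)^4; (T 1)^3, (T 1)^2, (T 1)^3; 0, -(T 1), -(T 1)^2] :=
  burau_s1s2s1s3_generic (T 1)

theorem mem_matExps {A : Matrix (Fin 3) (Fin 3) (LaurentPolynomial ℤ)} {k : ℤ} :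
    k ∈ matExps A ↔ ∃ i j, k ∈ (A i j).coeff.support := by
  simp [matExps]

theorem matExps_BurauB_s1s2s1s3 :
    matExps (BurauB 0 * BurauB 1 * BurauB 0 * BurauB 2) = {1, 2, 3, 4} := by
  ext k
  simp only [Fin.isValue, BurauB_s1s2s1s3, T_pow, Nat.cast_ofNat, mul_one, mem_matExps,
    Matrix.of_apply, Matrix.cons_val', Matrix.cons_val_fin_one, Finsupp.mem_support_iff, ne_eq,
    Fin.exists_fin_succ, Matrix.cons_val_zero, Matrix.cons_val_succ, exists_const,
    AddMonoidAlgebra.coeff_zero, Finsupp.coe_zero, Pi.zero_apply, not_true_eq_false,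
    AddMonoidAlgebra.coeff_neg, Finsupp.coe_neg, Pi.neg_apply, T_apply, neg_eq_zero,
    ite_eq_right_iff, one_ne_zero, imp_false, Decidable.not_not, false_or, Set.mem_insert_iff,
    Set.mem_singleton_iff]
  omega

theorem projlen_eq_of_isGreatest_of_isLeast {A : Matrix (Fin 3) (Fin 3) (LaurentPolynomial ℤ)}
    {d w : ℤ} (hd : IsGreatest (matExps A) d) (hw : IsLeast (matExps A) w) :
    projlen A = d - w := by
  rw [projlen, matDeg, matVal, hd.csSup_eq, hw.csInf_eq]

/-- The Burau matrix of the positive lift of `u = s1 s2 s1 s3` in `B4`, and the fact that its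
`projlen` equals `3`, which is odd — so the `B3` identity `projlen = 2 · (Garside length)`
fails for `B4`. -/
theorem burau_lift_s1s2s1s3 :
    BurauB 0 * BurauB 1 * BurauB 0 * BurauB 2 =
      !![0, 0, -(T 1)^4; (T 1)^3, (T 1)^2, (T 1)^3; 0, -(T 1), -(T 1)^2] ∧
    projlen (BurauB 0 * BurauB 1 * BurauB 0 * BurauB 2) = 3 := by
  refine ⟨BurauB_s1s2s1s3, ?_⟩
  have hdeg : IsGreatest (matExps (BurauB 0 * BurauB 1 * BurauB 0 * BurauB 2)) 4 := by
    rw [matExps_BurauB_s1s2s1s3]; constructor <;> simp [upperBounds]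
  have hval : IsLeast (matExps (BurauB 0 * BurauB 1 * BurauB 0 * BurauB 2)) 1 := by
    rw [matExps_BurauB_s1s2s1s3]; constructor <;> simp [lowerBounds]
  rw [projlen_eq_of_isGreatest_of_isLeast hdeg hval]
  norm_num
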